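/- Let C ≥ 2 and η ∈ (0, C]. Then sup_{E ∈ [−C, C]} | (1/π) Im m(E + iη) − f_σ(E) | ≤ √(Cη), where m is the Stieltjes transform of the semicircle distribution and f_σ its density. -/

import Mathlib

open MeasureTheory

noncomputable section

/-- Density of the semicircle distribution. -/
def semicircleDensity (x : ℝ) : ℝ := (2 * Real.pi)⁻¹ * Real.sqrt (max (4 - x ^ 2) 0)

/-- The semicircle distribution on ℝ. -/
def semicircle : Measure ℝ :=
  volume.withDensity fun x => ENNReal.ofReal (semicircleDensity x)

/-- Stieltjes transform of the semicircle distribution. -/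
def msc (z : ℂ) : ℂ := ∫ x : ℝ, ((x : ℂ) - z)⁻¹ ∂semicircle

lemma scd_nonneg (x : ℝ) : 0 ≤ semicircleDensity x := by
  unfold semicircleDensity
  positivity

lemma scd_cont : Continuous semicircleDensity := by
  unfold semicircleDensity
  fun_prop

lemma scd_le (x : ℝ) : semicircleDensity x ≤ (2 * Real.pi)⁻¹ * 2 := by
  unfold semicircleDensity
  have h2 : Real.sqrt (max (4 - x ^ 2) 0) ≤ 2 := by
    rw [show (2:ℝ) = Real.sqrt 4 by
      rw [show (4:ℝ) = 2^2 by norm_num, Real.sqrt_sq]; norm_num]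
    apply Real.sqrt_le_sqrt
    rcases le_or_gt (4 - x^2) 0 with h | h
    · rw [max_eq_right h]; norm_num
    · rw [max_eq_left h.le]; nlinarith [sq_nonneg x]
  have hπ : (0:ℝ) < (2 * Real.pi)⁻¹ := by positivity
  nlinarith [Real.sqrt_nonneg (max (4 - x ^ 2) 0)]

lemma scd_zero {x : ℝ} (hx : 4 - x ^ 2 ≤ 0) : semicircleDensity x = 0 := by
  unfold semicircleDensity
  rw [max_eq_right hx, Real.sqrt_zero, mul_zero]

lemma my_sqrt_add_le (u v : ℝ) (hu : 0 ≤ u) (hv : 0 ≤ v) :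
    Real.sqrt (u + v) ≤ Real.sqrt u + Real.sqrt v := by
  have h1 := Real.sq_sqrt hu
  have h2 := Real.sq_sqrt hv
  have h : u + v ≤ (Real.sqrt u + Real.sqrt v) ^ 2 := by
    nlinarith [Real.sqrt_nonneg u, Real.sqrt_nonneg v]
  calc Real.sqrt (u + v) ≤ Real.sqrt ((Real.sqrt u + Real.sqrt v) ^ 2) :=
        Real.sqrt_le_sqrt h
    _ = Real.sqrt u + Real.sqrt v := Real.sqrt_sq (by positivity)

lemma my_sqrt_sub_le (u v : ℝ) (hv : 0 ≤ v) :
    Real.sqrt u - Real.sqrt v ≤ Real.sqrt |u - v| := by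
  have h1 : u ≤ v + |u - v| := by
    rcases abs_cases (u - v) with ⟨h, _⟩ | ⟨h, _⟩ <;> linarith
  calc Real.sqrt u - Real.sqrt v ≤ Real.sqrt (v + |u - v|) - Real.sqrt v := by
        have := Real.sqrt_le_sqrt h1; linarith
    _ ≤ Real.sqrt v + Real.sqrt |u - v| - Real.sqrt v := by
        have := my_sqrt_add_le v |u - v| hv (abs_nonneg _); linarith
    _ = Real.sqrt |u - v| := by ring

lemma my_sqrt_max_sub (a b : ℝ) :
    |Real.sqrt (max a 0) - Real.sqrt (max b 0)| ≤ Real.sqrt |a - b| := by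
  have key : ∀ c d : ℝ, Real.sqrt (max c 0) - Real.sqrt (max d 0) ≤ Real.sqrt |c - d| := by
    intro c d
    calc Real.sqrt (max c 0) - Real.sqrt (max d 0) ≤ Real.sqrt |max c 0 - max d 0| :=
          my_sqrt_sub_le _ _ (le_max_right _ _)
      _ ≤ Real.sqrt |c - d| := Real.sqrt_le_sqrt (abs_max_sub_max_le_abs c d 0)
  rw [abs_sub_le_iff]
  exact ⟨key a b, by rw [abs_sub_comm]; exact key b a⟩

/-- Hölder-1/2 bound for the semicircle density. -/
lemma scd_holder (x y : ℝ) :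
    |semicircleDensity x - semicircleDensity y| ≤
      Real.sqrt 5 / (2 * Real.pi) * Real.sqrt |x - y| := by
  have pi_pos := Real.pi_pos
  have key : ∀ u v : ℝ, semicircleDensity u - semicircleDensity v ≤
      Real.sqrt 5 / (2 * Real.pi) * Real.sqrt |u - v| := by
    intro u v
    rcases le_or_gt (4 - u ^ 2) 0 with hu | hu
    · rw [scd_zero hu]
      have : (0:ℝ) ≤ Real.sqrt 5 / (2 * Real.pi) * Real.sqrt |u - v| := by positivity
      linarith [scd_nonneg v]
    · have hu2 : |u| < 2 := by nlinarith [abs_nonneg u, sq_abs u]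
      rcases le_or_gt |v| 3 with hv | hv
      · -- |u + v| ≤ 5
        have h1 : |semicircleDensity u - semicircleDensity v| ≤
            (2 * Real.pi)⁻¹ * Real.sqrt |(4 - u ^ 2) - (4 - v ^ 2)| := by
          unfold semicircleDensity
          rw [← mul_sub, abs_mul, abs_of_nonneg (by positivity :
              (0:ℝ) ≤ (2 * Real.pi)⁻¹)]
          gcongr
          exact my_sqrt_max_sub _ _
        have h2 : |(4 - u ^ 2) - (4 - v ^ 2)| ≤ 5 * |u - v| := by
          have he : (4 - u ^ 2) - (4 - v ^ 2) = -((u + v) * (u - v)) := by ring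
          rw [he, abs_neg, abs_mul]
          have huv : |u + v| ≤ 5 := by
            calc |u + v| ≤ |u| + |v| := abs_add_le u v
              _ ≤ 5 := by linarith
          have := abs_nonneg (u - v)
          nlinarith
        calc semicircleDensity u - semicircleDensity v
            ≤ |semicircleDensity u - semicircleDensity v| := le_abs_self _
          _ ≤ (2 * Real.pi)⁻¹ * Real.sqrt |(4 - u ^ 2) - (4 - v ^ 2)| := h1
          _ ≤ (2 * Real.pi)⁻¹ * Real.sqrt (5 * |u - v|) := by
              exact mul_le_mul_of_nonneg_left (Real.sqrt_le_sqrt h2)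
                (by positivity)
          _ = Real.sqrt 5 / (2 * Real.pi) * Real.sqrt |u - v| := by
              rw [Real.sqrt_mul (by norm_num)]
              ring
      · -- |v| > 3, so |u - v| ≥ 1
        have huv : 1 ≤ |u - v| := by
          have h3 : |v| - |u| ≤ |u - v| := by
            rw [abs_sub_comm]
            exact le_trans (by linarith [abs_sub_abs_le_abs_sub v u]) le_rfl
          linarith
        have h1 : semicircleDensity u ≤ (2 * Real.pi)⁻¹ * 2 := scd_le u
        have h5 : (2:ℝ) ≤ Real.sqrt 5 := by
          rw [show (2:ℝ) = Real.sqrt 4 by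
            rw [show (4:ℝ) = 2^2 by norm_num, Real.sqrt_sq]; norm_num]
          exact Real.sqrt_le_sqrt (by norm_num)
        have h6 : 1 ≤ Real.sqrt |u - v| := by
          rw [show (1:ℝ) = Real.sqrt 1 by simp]
          exact Real.sqrt_le_sqrt huv
        have h7 : (2 * Real.pi)⁻¹ * 2 ≤ Real.sqrt 5 / (2 * Real.pi) * Real.sqrt |u - v| := by
          rw [div_eq_mul_inv]
          have hp : (0:ℝ) < (2 * Real.pi)⁻¹ := by positivity
          have hab : (2:ℝ) * 1 ≤ Real.sqrt 5 * Real.sqrt |u - v| :=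
            mul_le_mul h5 h6 (by norm_num) (by positivity)
          nlinarith
        linarith [scd_nonneg v]
  rw [abs_sub_le_iff]
  constructor
  · exact key x y
  · rw [abs_sub_comm]; exact key y x

/-- The (unnormalized) Poisson kernel. -/
def pker (η t : ℝ) : ℝ := η / (t ^ 2 + η ^ 2)

/-- The integrand appearing in the Hölder estimate. -/
def hker (η t : ℝ) : ℝ := Real.sqrt |t| * pker η t

lemma pker_nonneg {η : ℝ} (hη : 0 < η) (t : ℝ) : 0 ≤ pker η t := by
  unfold pker; positivity

lemma pker_cont {η : ℝ} (hη : 0 < η) : Continuous (pker η) := by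
  unfold pker
  exact continuous_const.div (by fun_prop) (fun t => by positivity)

lemma hker_nonneg {η : ℝ} (hη : 0 < η) (t : ℝ) : 0 ≤ hker η t := by
  unfold hker
  exact mul_nonneg (Real.sqrt_nonneg _) (pker_nonneg hη t)

lemma hker_cont {η : ℝ} (hη : 0 < η) : Continuous (hker η) := by
  unfold hker
  exact (Real.continuous_sqrt.comp continuous_abs).mul (pker_cont hη)

lemma hker_even (η t : ℝ) : hker η (-t) = hker η t := by
  unfold hker pker
  rw [abs_neg, neg_pow]
  ring_nf

lemma pker_eq {η : ℝ} (hη : 0 < η) :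
    pker η = fun t => η⁻¹ * (1 + (t / η) ^ 2)⁻¹ := by
  funext t
  unfold pker
  have h1 : t ^ 2 + η ^ 2 > 0 := by positivity
  field_simp
  ring

lemma pker_integrable {η : ℝ} (hη : 0 < η) : Integrable (pker η) := by
  rw [pker_eq hη]
  exact (integrable_inv_one_add_sq.comp_div hη.ne').const_mul _

lemma pker_integral {η : ℝ} (hη : 0 < η) : ∫ t : ℝ, pker η t = Real.pi := by
  rw [pker_eq hη]
  rw [integral_const_mul]
  rw [MeasureTheory.Measure.integral_comp_div (fun y : ℝ => (1 + y ^ 2)⁻¹) η]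
  rw [integral_univ_inv_one_add_sq, smul_eq_mul, abs_of_pos hη]
  field_simp

lemma hker_le_rpow {η : ℝ} (hη : 0 < η) {t : ℝ} (ht : t ∈ Set.Ioi η) :
    hker η t ≤ η * t ^ ((-3 : ℝ) / 2) := by
  have ht0 : 0 < t := hη.trans ht
  unfold hker pker
  rw [abs_of_pos ht0]
  have hr : t ^ ((-3 : ℝ) / 2) = Real.sqrt t / t ^ 2 := by
    rw [Real.sqrt_eq_rpow, show ((-3 : ℝ) / 2) = 1 / 2 - 2 by norm_num,
      Real.rpow_sub ht0]
    norm_num [Real.rpow_two]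
  rw [hr]
  have hmem : η < t := Set.mem_Ioi.mp ht
  calc Real.sqrt t * (η / (t ^ 2 + η ^ 2)) ≤ Real.sqrt t * (η / t ^ 2) := by
        gcongr <;> nlinarith [Real.sqrt_nonneg t]
    _ = η * (Real.sqrt t / t ^ 2) := by ring

lemma rpow_integrableOn_Ioi {η : ℝ} (hη : 0 < η) :
    IntegrableOn (fun t : ℝ => η * t ^ ((-3 : ℝ) / 2)) (Set.Ioi η) :=
  (integrableOn_Ioi_rpow_of_lt (by norm_num) hη).const_mul η

lemma hker_intOn_Ioi {η : ℝ} (hη : 0 < η) : IntegrableOn (hker η) (Set.Ioi η) := by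
  apply Integrable.mono (rpow_integrableOn_Ioi hη)
    ((hker_cont hη).aestronglyMeasurable.restrict)
  filter_upwards [ae_restrict_mem measurableSet_Ioi] with t ht
  rw [Real.norm_eq_abs, abs_of_nonneg (hker_nonneg hη t), Real.norm_eq_abs]
  have ht0 : (0:ℝ) < t := hη.trans ht
  have hnn : (0:ℝ) ≤ η * t ^ ((-3 : ℝ) / 2) := by positivity
  rw [abs_of_nonneg hnn]
  exact hker_le_rpow hη ht

lemma hker_int_Ioi_le {η : ℝ} (hη : 0 < η) :
    ∫ t in Set.Ioi η, hker η t ≤ 2 * Real.sqrt η := by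
  have h1 : ∫ t in Set.Ioi η, hker η t ≤ ∫ t in Set.Ioi η, η * t ^ ((-3 : ℝ) / 2) := by
    apply setIntegral_mono_on (hker_intOn_Ioi hη) (rpow_integrableOn_Ioi hη)
      measurableSet_Ioi
    exact fun t ht => hker_le_rpow hη ht
  have h2 : ∫ t in Set.Ioi η, η * t ^ ((-3 : ℝ) / 2) = 2 * Real.sqrt η := by
    rw [MeasureTheory.integral_const_mul, integral_Ioi_rpow_of_lt (by norm_num) hη]
    rw [show ((-3 : ℝ) / 2 + 1) = -(1/2) by norm_num]
    rw [show -η ^ (-(1/2:ℝ)) / (-(1/2:ℝ)) = 2 * η ^ (-(1/2:ℝ)) by ring]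
    rw [Real.sqrt_eq_rpow]
    rw [show η * (2 * η ^ (-(1/2:ℝ))) = 2 * (η ^ (1:ℝ) * η ^ (-(1/2:ℝ))) by
      rw [Real.rpow_one]; ring]
    rw [← Real.rpow_add hη]
    norm_num
  linarith

lemma hker_intOn_Ioc {η : ℝ} (hη : 0 < η) :
    IntegrableOn (hker η) (Set.Ioc (-η) η) :=
  (hker_cont hη).integrableOn_Ioc

lemma hker_int_Ioc_le {η : ℝ} (hη : 0 < η) :
    ∫ t in Set.Ioc (-η) η, hker η t ≤ 2 * Real.sqrt η := by
  have hbound : ∀ t ∈ Set.Ioc (-η) η, ‖hker η t‖ ≤ Real.sqrt η / η := by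
    intro t ht
    rw [Real.norm_eq_abs, abs_of_nonneg (hker_nonneg hη t)]
    unfold hker pker
    have h1 : Real.sqrt |t| ≤ Real.sqrt η := by
      apply Real.sqrt_le_sqrt
      rw [abs_le]
      exact ⟨ht.1.le, ht.2⟩
    have h2 : η / (t ^ 2 + η ^ 2) ≤ 1 / η := by
      rw [div_le_div_iff₀ (by positivity) hη]
      nlinarith [sq_nonneg t]
    calc Real.sqrt |t| * (η / (t ^ 2 + η ^ 2)) ≤ Real.sqrt η * (1 / η) := by
          apply mul_le_mul h1 h2 (by positivity) (Real.sqrt_nonneg η)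
      _ = Real.sqrt η / η := by ring
  have hvol : volume (Set.Ioc (-η) η) < ⊤ := by
    rw [Real.volume_Ioc]
    exact ENNReal.ofReal_lt_top
  have := norm_setIntegral_le_of_norm_le_const hvol hbound
  calc ∫ t in Set.Ioc (-η) η, hker η t ≤ ‖∫ t in Set.Ioc (-η) η, hker η t‖ :=
        le_abs_self _
    _ ≤ Real.sqrt η / η * (volume (Set.Ioc (-η) η)).toReal := this
    _ = 2 * Real.sqrt η := by
        rw [Real.volume_Ioc, ENNReal.toReal_ofReal (by linarith)]
        field_simp
        ring

lemma restrict_Iic_neg_eq {η : ℝ} :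
    volume.restrict (Set.Iic (-η)) =
      Measure.map (fun x : ℝ => -x) (volume.restrict (Set.Ici η)) := by
  have A : MeasurableEmbedding (fun x : ℝ => -x) :=
    (Homeomorph.neg ℝ).isClosedEmbedding.measurableEmbedding
  have hset : ((fun x : ℝ => -x) ⁻¹' Set.Iic (-η)) = Set.Ici η := by
    ext x
    simp only [Set.mem_preimage, Set.mem_Iic, Set.mem_Ici]
    constructor <;> intro h <;> linarith
  conv_lhs => rw [← Measure.map_neg_eq_self (volume : Measure ℝ)]
  rw [A.restrict_map, hset]

lemma hker_intOn_Iic {η : ℝ} (hη : 0 < η) : IntegrableOn (hker η) (Set.Iic (-η)) := by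
  have A : MeasurableEmbedding (fun x : ℝ => -x) :=
    (Homeomorph.neg ℝ).isClosedEmbedding.measurableEmbedding
  rw [IntegrableOn, restrict_Iic_neg_eq, A.integrable_map_iff]
  have : (hker η ∘ fun x : ℝ => -x) = hker η := by
    funext x; exact hker_even η x
  rw [this]
  rw [← IntegrableOn, integrableOn_Ici_iff_integrableOn_Ioi]
  exact hker_intOn_Ioi hη

lemma hker_int_Iic_le {η : ℝ} (hη : 0 < η) :
    ∫ t in Set.Iic (-η), hker η t ≤ 2 * Real.sqrt η := by
  have h1 : ∫ t in Set.Iic (-η), hker η t = ∫ t in Set.Ioi η, hker η t := by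
    rw [← integral_comp_neg_Ioi]
    congr 1
    funext x
    exact hker_even η x
  rw [h1]
  exact hker_int_Ioi_le hη

lemma hker_integrable {η : ℝ} (hη : 0 < η) : Integrable (hker η) := by
  have h1 : IntegrableOn (hker η) (Set.Ioi (-η)) := by
    rw [show Set.Ioi (-η) = Set.Ioc (-η) η ∪ Set.Ioi η from
      (Set.Ioc_union_Ioi_eq_Ioi (by linarith)).symm]
    exact (hker_intOn_Ioc hη).union (hker_intOn_Ioi hη)
  have h2 := (hker_intOn_Iic hη).union h1
  rwa [Set.Iic_union_Ioi, integrableOn_univ] at h2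

lemma hker_integral_le {η : ℝ} (hη : 0 < η) :
    ∫ t : ℝ, hker η t ≤ 6 * Real.sqrt η := by
  have hsplit1 : (∫ t in Set.Iic (-η), hker η t) + ∫ t in Set.Ioi (-η), hker η t =
      ∫ t : ℝ, hker η t :=
    intervalIntegral.integral_Iic_add_Ioi ((hker_integrable hη).integrableOn)
      ((hker_integrable hη).integrableOn)
  have hsplit2 : ∫ t in Set.Ioi (-η), hker η t =
      (∫ t in Set.Ioc (-η) η, hker η t) + ∫ t in Set.Ioi η, hker η t := by
    rw [show Set.Ioi (-η) = Set.Ioc (-η) η ∪ Set.Ioi η from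
      (Set.Ioc_union_Ioi_eq_Ioi (by linarith)).symm]
    exact setIntegral_union (Set.Ioc_disjoint_Ioi le_rfl) measurableSet_Ioi
      (hker_intOn_Ioc hη) (hker_intOn_Ioi hη)
  have b1 := hker_int_Iic_le hη
  have b2 := hker_int_Ioc_le hη
  have b3 := hker_int_Ioi_le hη
  linarith

lemma sub_z_ne_zero {η : ℝ} (hη : 0 < η) (E x : ℝ) :
    ((x : ℂ) - ((E : ℂ) + (η : ℂ) * Complex.I)) ≠ 0 := by
  intro h
  have him : ((x : ℂ) - ((E : ℂ) + (η : ℂ) * Complex.I)).im = -η := by simp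
  rw [h] at him
  simp at him
  linarith

lemma msc_eq {η : ℝ} (hη : 0 < η) (E : ℝ) :
    msc ((E : ℂ) + (η : ℂ) * Complex.I) =
      ∫ x : ℝ, semicircleDensity x • ((x : ℂ) - ((E : ℂ) + (η : ℂ) * Complex.I))⁻¹ := by
  unfold msc semicircle
  have hmeas : Measurable fun x => (semicircleDensity x).toNNReal :=
    scd_cont.measurable.real_toNNReal
  have hrw : (fun x : ℝ => ENNReal.ofReal (semicircleDensity x)) =
      fun x => ((semicircleDensity x).toNNReal : ENNReal) := rfl
  rw [hrw, integral_withDensity_eq_integral_smul hmeas]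
  congr 1
  funext x
  rw [NNReal.smul_def, Real.coe_toNNReal _ (scd_nonneg x)]

lemma msc_integrand_integrable {η : ℝ} (hη : 0 < η) (E : ℝ) :
    Integrable (fun x : ℝ =>
      semicircleDensity x • ((x : ℂ) - ((E : ℂ) + (η : ℂ) * Complex.I))⁻¹) := by
  apply Continuous.integrable_of_hasCompactSupport
  · apply Continuous.smul scd_cont
    apply Continuous.inv₀
    · fun_prop
    · exact fun x => sub_z_ne_zero hη E x
  · apply HasCompactSupport.intro (isCompact_Icc (a := (-2:ℝ)) (b := 2))
    intro x hx
    have : 4 - x ^ 2 ≤ 0 := by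
      simp only [Set.mem_Icc, not_and_or, not_le] at hx
      rcases hx with h | h <;> nlinarith
    rw [scd_zero this, zero_smul]

lemma msc_im_eq {η : ℝ} (hη : 0 < η) (E : ℝ) :
    (msc ((E : ℂ) + (η : ℂ) * Complex.I)).im =
      ∫ x : ℝ, semicircleDensity x * pker η (x - E) := by
  rw [msc_eq hη E]
  rw [show (∫ x : ℝ, semicircleDensity x •
        ((x : ℂ) - ((E : ℂ) + (η : ℂ) * Complex.I))⁻¹).im =
      Complex.imCLM (∫ x : ℝ, semicircleDensity x •
        ((x : ℂ) - ((E : ℂ) + (η : ℂ) * Complex.I))⁻¹) from rfl]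
  rw [← ContinuousLinearMap.integral_comp_comm Complex.imCLM
    (msc_integrand_integrable hη E)]
  congr 1
  funext x
  rw [Complex.imCLM_apply, Complex.smul_im, smul_eq_mul]
  congr 1
  have hre : ((x : ℂ) - ((E : ℂ) + (η : ℂ) * Complex.I)).re = x - E := by simp
  have him : ((x : ℂ) - ((E : ℂ) + (η : ℂ) * Complex.I)).im = -η := by simp
  rw [Complex.inv_im, Complex.normSq_apply, hre, him]
  unfold pker
  rw [show (x - E) * (x - E) + -η * -η = (x - E) ^ 2 + η ^ 2 by ring, neg_neg]

lemma pker_shift_integrable {η : ℝ} (hη : 0 < η) (E : ℝ) :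
    Integrable (fun x : ℝ => pker η (x - E)) :=
  (pker_integrable hη).comp_sub_right E

lemma pker_shift_integral {η : ℝ} (hη : 0 < η) (E : ℝ) :
    ∫ x : ℝ, pker η (x - E) = Real.pi := by
  rw [integral_sub_right_eq_self (fun t => pker η t) E]
  exact pker_integral hη

lemma hker_shift_integrable {η : ℝ} (hη : 0 < η) (E : ℝ) :
    Integrable (fun x : ℝ => hker η (x - E)) :=
  (hker_integrable hη).comp_sub_right E

lemma hker_shift_integral_le {η : ℝ} (hη : 0 < η) (E : ℝ) :
    ∫ x : ℝ, hker η (x - E) ≤ 6 * Real.sqrt η := by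
  rw [integral_sub_right_eq_self (fun t => hker η t) E]
  exact hker_integral_le hη

lemma scd_mul_pker_integrable {η : ℝ} (hη : 0 < η) (E : ℝ) :
    Integrable (fun x : ℝ => semicircleDensity x * pker η (x - E)) := by
  apply Integrable.bdd_mul (c := (2 * Real.pi)⁻¹ * 2) (pker_shift_integrable hη E) scd_cont.aestronglyMeasurable
  refine Filter.Eventually.of_forall (fun x => ?_)
  rw [Real.norm_eq_abs, abs_of_nonneg (scd_nonneg x)]
  exact scd_le x

lemma diff_mul_pker_integrable {η : ℝ} (hη : 0 < η) (E : ℝ) :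
    Integrable (fun x : ℝ => (semicircleDensity x - semicircleDensity E) * pker η (x - E)) := by
  apply Integrable.bdd_mul (c := (2 * Real.pi)⁻¹ * 2 + (2 * Real.pi)⁻¹ * 2) (pker_shift_integrable hη E)
    (scd_cont.sub continuous_const).aestronglyMeasurable
  refine Filter.Eventually.of_forall (fun x => ?_)
  rw [Real.norm_eq_abs]
  calc |semicircleDensity x - semicircleDensity E|
      ≤ |semicircleDensity x| + |semicircleDensity E| := abs_sub _ _
    _ ≤ (2 * Real.pi)⁻¹ * 2 + (2 * Real.pi)⁻¹ * 2 := by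
        rw [abs_of_nonneg (scd_nonneg x), abs_of_nonneg (scd_nonneg E)]
        exact add_le_add (scd_le x) (scd_le E)

/-- Main estimate with explicit constant. -/
lemma main_estimate {η : ℝ} (hη : 0 < η) (E : ℝ) :
    |Real.pi⁻¹ * (msc ((E : ℂ) + (η : ℂ) * Complex.I)).im - semicircleDensity E| ≤
      Real.pi⁻¹ * (Real.sqrt 5 / (2 * Real.pi)) * (6 * Real.sqrt η) := by
  have pi_pos := Real.pi_pos
  have key : Real.pi⁻¹ * (msc ((E : ℂ) + (η : ℂ) * Complex.I)).im - semicircleDensity E =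
      Real.pi⁻¹ * ∫ x : ℝ,
        (semicircleDensity x - semicircleDensity E) * pker η (x - E) := by
    have h1 : ∫ x : ℝ, (semicircleDensity x - semicircleDensity E) * pker η (x - E) =
        (∫ x : ℝ, semicircleDensity x * pker η (x - E)) -
          ∫ x : ℝ, semicircleDensity E * pker η (x - E) := by
      rw [← integral_sub (scd_mul_pker_integrable hη E)
        ((pker_shift_integrable hη E).const_mul _)]
      congr 1
      funext x
      ring
    have h2 : ∫ x : ℝ, semicircleDensity E * pker η (x - E) =
        semicircleDensity E * Real.pi := by
      rw [integral_const_mul, pker_shift_integral hη E]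
    rw [msc_im_eq hη E, h1, h2]
    field_simp
  rw [key, abs_mul, abs_of_nonneg (by positivity : (0:ℝ) ≤ Real.pi⁻¹)]
  rw [mul_assoc]
  gcongr Real.pi⁻¹ * ?_
  calc |∫ x : ℝ, (semicircleDensity x - semicircleDensity E) * pker η (x - E)|
      ≤ ∫ x : ℝ, |semicircleDensity x - semicircleDensity E| * |pker η (x - E)| := by
        simpa [Real.norm_eq_abs] using
          norm_integral_le_integral_norm
            (fun x : ℝ => (semicircleDensity x - semicircleDensity E) * pker η (x - E))
    _ ≤ ∫ x : ℝ, Real.sqrt 5 / (2 * Real.pi) * hker η (x - E) := by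
        apply integral_mono_of_nonneg
        · filter_upwards with x
          positivity
        · exact (hker_shift_integrable hη E).const_mul _
        · filter_upwards with x
          rw [abs_of_nonneg (pker_nonneg hη _)]
          unfold hker
          calc |semicircleDensity x - semicircleDensity E| * pker η (x - E)
              ≤ Real.sqrt 5 / (2 * Real.pi) * Real.sqrt |x - E| * pker η (x - E) := by
                exact mul_le_mul_of_nonneg_right (scd_holder x E) (pker_nonneg hη _)
            _ = Real.sqrt 5 / (2 * Real.pi) * (Real.sqrt |x - E| * pker η (x - E)) := by
                ring
    _ = Real.sqrt 5 / (2 * Real.pi) * ∫ x : ℝ, hker η (x - E) := integral_const_mul _ _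
    _ ≤ Real.sqrt 5 / (2 * Real.pi) * (6 * Real.sqrt η) := by
        apply mul_le_mul_of_nonneg_left (hker_shift_integral_le hη E) (by positivity)

/-- **Approximation of the semicircle density by its Cauchy regularization**
(Lemma A.6): for `C ≥ 2` and `η ∈ (0, C]`,
`sup_{E ∈ [-C,C]} |(1/π) Im m(E + iη) - f_σ(E)| ≤ √(Cη)`. -/
theorem stieltjes_to_semicircle_density
    (C : ℝ) (hC : 2 ≤ C) (η : ℝ) (hη : η ∈ Set.Ioc (0:ℝ) C) :
    ∀ E ∈ Set.Icc (-C) C,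
      |Real.pi⁻¹ * (msc (E + η * Complex.I)).im - semicircleDensity E| ≤
        Real.sqrt (C * η) := by
  intro E _
  have hη0 : 0 < η := hη.1
  have pi_pos := Real.pi_pos
  have pi_gt_three := Real.pi_gt_three
  refine le_trans (main_estimate hη0 E) ?_
  have hconst : Real.pi⁻¹ * (Real.sqrt 5 / (2 * Real.pi)) * 6 ≤ 1 := by
    have h5 : Real.sqrt 5 ≤ 3 := by
      rw [show (3:ℝ) = Real.sqrt 9 by
        rw [show (9:ℝ) = 3^2 by norm_num, Real.sqrt_sq]; norm_num]
      exact Real.sqrt_le_sqrt (by norm_num)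
    have hππ : (9:ℝ) ≤ Real.pi * Real.pi := by nlinarith
    have h0 : (0:ℝ) < Real.pi * Real.pi := by positivity
    have heq : Real.pi⁻¹ * (Real.sqrt 5 / (2 * Real.pi)) * 6 =
        3 * Real.sqrt 5 / (Real.pi * Real.pi) := by
      field_simp
      ring
    rw [heq, div_le_one h0]
    nlinarith [Real.sqrt_nonneg 5]
  have h1 : (1:ℝ) ≤ Real.sqrt C := by
    rw [show (1:ℝ) = Real.sqrt 1 by simp]
    exact Real.sqrt_le_sqrt (by linarith)
  calc Real.pi⁻¹ * (Real.sqrt 5 / (2 * Real.pi)) * (6 * Real.sqrt η)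
      = Real.pi⁻¹ * (Real.sqrt 5 / (2 * Real.pi)) * 6 * Real.sqrt η := by ring
    _ ≤ 1 * Real.sqrt η := by
        exact mul_le_mul_of_nonneg_right hconst (Real.sqrt_nonneg η)
    _ ≤ Real.sqrt C * Real.sqrt η := by
        exact mul_le_mul_of_nonneg_right h1 (Real.sqrt_nonneg η)
    _ = Real.sqrt (C * η) := (Real.sqrt_mul (by linarith) η).symm

end
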